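/- Let T > 0, α ∈ (1/2, 1) and c > 0, and let g : [0,T) → ℝ be measurable with 0 < g(t) ≤ c(T−t)^α and g(t)^{−1} ≤ c(1 + (T−t)^{−α}) for all t ∈ [0,T). Let A ∈ ℝ^{n×n}, let b ∈ ℝ^{n×n} be invertible, and let G : [0,T] → ℝ^{n×n} be measurable with each G(t) symmetric positive definite and ‖G(t)‖ ≤ C for all t, for some constant C > 0. Set Γ(t) = g(t)G(t) and Q(t) = e^{A(T−t)} b Γ(t)^{−1} b^⊤ e^{A^⊤(T−t)}. Then there exists λ > 0, depending only on A, b, c, C, n and T, such that v^⊤ Q(t) v ≥ λ (T−t)^{−α} |v|² for all t ∈ [0,T) and all v ∈ ℝ^n. -/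

import Mathlib

open MeasureTheory Matrix Set

/-! Write `Q t = Mᵀ Γ(t)⁻¹ M` with `M = bᵀ e^{Aᵀ(T-t)}`. The quadratic form then picks up three
factors: `g(t)⁻¹ ≥ c⁻¹ (T-t)^(-α)`; `G(t)⁻¹ ≥ C⁻¹` because `0 < G(t) ≤ C`; and `|M v|² ≥ κ |v|²`
uniformly in `t`, since `s ↦ bᵀ e^{s Aᵀ}` is a continuous family of invertible matrices on the
compact interval `[0, T]`. -/

noncomputable def mexp {n : ℕ} (M : Matrix (Fin n) (Fin n) ℝ) : Matrix (Fin n) (Fin n) ℝ :=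
  NormedSpace.exp M

namespace Matrix

variable {m : Type*} [Fintype m]

theorem PosSemidef.dotProduct_mulVec_sq_le {H : Matrix m m ℝ}
    (hH : H.PosSemidef) (x y : m → ℝ) :
    (x ⬝ᵥ H *ᵥ y) ^ 2 ≤ (x ⬝ᵥ H *ᵥ x) * (y ⬝ᵥ H *ᵥ y) := by
  let := H.toSeminormedAddCommGroup hH
  let := H.toInnerProductSpace hH
  have e : ∀ u v : m → ℝ, (inner ℝ u v : ℝ) = u ⬝ᵥ H *ᵥ v := fun u v => by
    change (H *ᵥ v) ⬝ᵥ star u = _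
    rw [star_trivial, dotProduct_comm]
  simpa only [e, sq] using real_inner_mul_inner_self_le x y

theorem dotProduct_mulVec_le_of_mulVec_dotProduct_self_le {H : Matrix m m ℝ} {C : ℝ}
    (hC : 0 ≤ C) (hH : ∀ v, H *ᵥ v ⬝ᵥ H *ᵥ v ≤ C ^ 2 * (v ⬝ᵥ v)) (v : m → ℝ) :
    v ⬝ᵥ H *ᵥ v ≤ C * (v ⬝ᵥ v) := by
  have hcs : (v ⬝ᵥ H *ᵥ v) ^ 2 ≤ (v ⬝ᵥ v) * (H *ᵥ v ⬝ᵥ H *ᵥ v) := by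
    simpa only [dotProduct, sq] using Finset.sum_mul_sq_le_sq_mul_sq Finset.univ v (H *ᵥ v)
  have hv : 0 ≤ v ⬝ᵥ v := dotProduct_star_self_nonneg v
  refine (le_abs_self _).trans (abs_le_of_sq_le_sq ?_ (by positivity))
  calc (v ⬝ᵥ H *ᵥ v) ^ 2 ≤ (v ⬝ᵥ v) * (C ^ 2 * (v ⬝ᵥ v)) :=
        hcs.trans (mul_le_mul_of_nonneg_left (hH v) hv)
    _ = (C * (v ⬝ᵥ v)) ^ 2 := by ring

theorem PosDef.dotProduct_self_le_mul_dotProduct_inv_mulVec [DecidableEq m] {H : Matrix m m ℝ}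
    (hH : H.PosDef) {C : ℝ} (hHC : ∀ v, v ⬝ᵥ H *ᵥ v ≤ C * (v ⬝ᵥ v)) (w : m → ℝ) :
    w ⬝ᵥ w ≤ C * (w ⬝ᵥ H⁻¹ *ᵥ w) := by
  set u := H⁻¹ *ᵥ w
  have hHu : H *ᵥ u = w := by
    rw [mulVec_mulVec, mul_nonsing_inv _ (isUnit_iff_ne_zero.mpr hH.det_pos.ne'), one_mulVec]
  have hHT : Hᵀ = H := by simpa using hH.isHermitian.eq
  have hsymm : ∀ x y, x ⬝ᵥ H *ᵥ y = y ⬝ᵥ H *ᵥ x := fun x y => by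
    rw [dotProduct_mulVec, ← mulVec_transpose, hHT, dotProduct_comm]
  -- Cauchy–Schwarz for the form of `H` on `u, w` reads `|w|⁴ ≤ (w ⬝ u) (w ⬝ H w)`.
  have hcs := hH.posSemidef.dotProduct_mulVec_sq_le u w
  rw [hsymm u w, hsymm u u, hHu, dotProduct_comm u w] at hcs
  have hw : 0 ≤ w ⬝ᵥ w := dotProduct_star_self_nonneg w
  have ha : 0 ≤ w ⬝ᵥ u := by
    simpa [← hHu, dotProduct_comm] using hH.posSemidef.dotProduct_mulVec_nonneg u
  rcases hw.eq_or_lt with hw0 | hwpos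
  · simp [dotProduct_self_eq_zero.mp hw0.symm]
  · nlinarith [hHC w]

theorem mulVec_dotProduct_mulVec_le (N : Matrix m m ℝ) (w : m → ℝ) :
    N *ᵥ w ⬝ᵥ N *ᵥ w ≤ (∑ i, ∑ j, N i j ^ 2) * (w ⬝ᵥ w) := by
  rw [Finset.sum_mul]
  refine Finset.sum_le_sum fun i _ => ?_
  simpa only [mulVec, dotProduct, sq] using Finset.sum_mul_sq_le_sq_mul_sq Finset.univ (N i) w

theorem dotProduct_transpose_mul_mul_mulVec (M X : Matrix m m ℝ) (v : m → ℝ) :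
    v ⬝ᵥ (Mᵀ * X * M) *ᵥ v = M *ᵥ v ⬝ᵥ X *ᵥ (M *ᵥ v) := by
  rw [← mulVec_mulVec, ← mulVec_mulVec, dotProduct_mulVec, vecMul_transpose]

theorem exists_pos_mul_dotProduct_self_le_of_continuousOn [DecidableEq m] {X : Type*}
    [TopologicalSpace X] {K : Set X} (hK : IsCompact K) {M : X → Matrix m m ℝ}
    (hM : ContinuousOn M K) (hdet : ∀ s ∈ K, IsUnit (M s).det) :
    ∃ κ > 0, ∀ s ∈ K, ∀ v, κ * (v ⬝ᵥ v) ≤ M s *ᵥ v ⬝ᵥ M s *ᵥ v := by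
  have hinv : ContinuousOn (fun s => (M s)⁻¹) K := fun s hs =>
    (continuousAt_matrix_inv _ (NormedRing.inverse_continuousAt (hdet s hs).unit)).comp_continuousWithinAt
      (hM s hs)
  have hf : ContinuousOn (fun s => ∑ i, ∑ j, (M s)⁻¹ i j ^ 2) K := by fun_prop
  obtain ⟨B, hB⟩ := hK.exists_bound_of_continuousOn hf
  refine ⟨(|B| + 1)⁻¹, by positivity, fun s hs v => ?_⟩
  have hv : v = (M s)⁻¹ *ᵥ (M s *ᵥ v) := by
    rw [mulVec_mulVec, nonsing_inv_mul _ (hdet s hs), one_mulVec]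
  have hMv : 0 ≤ M s *ᵥ v ⬝ᵥ M s *ᵥ v := dotProduct_star_self_nonneg _
  rw [inv_mul_le_iff₀ (by positivity)]
  calc v ⬝ᵥ v ≤ (∑ i, ∑ j, (M s)⁻¹ i j ^ 2) * (M s *ᵥ v ⬝ᵥ M s *ᵥ v) := by
        conv_lhs => rw [hv]
        exact mulVec_dotProduct_mulVec_le _ _
    _ ≤ (|B| + 1) * (M s *ᵥ v ⬝ᵥ M s *ᵥ v) := by
        gcongr
        linarith [Real.le_norm_self (∑ i, ∑ j, (M s)⁻¹ i j ^ 2), hB s hs, le_abs_self B]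

end Matrix

@[fun_prop]
theorem continuous_mexp {n : ℕ} : Continuous (mexp : Matrix (Fin n) (Fin n) ℝ → _) := by
  open scoped Norms.Operator in exact NormedSpace.exp_continuous

theorem isUnit_det_mexp {n : ℕ} (M : Matrix (Fin n) (Fin n) ℝ) : IsUnit (mexp M).det :=
  (isUnit_iff_isUnit_det _).mp (isUnit_exp M)

theorem mexp_smul_transpose {n : ℕ} (s : ℝ) (A : Matrix (Fin n) (Fin n) ℝ) :
    mexp (s • Aᵀ) = (mexp (s • A))ᵀ := by
  rw [mexp, mexp, ← transpose_smul, exp_transpose]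

theorem stmt4_general {n : ℕ} {T α c C : ℝ}
    (hc : 0 < c) (hC : 0 < C)
    (g : ℝ → ℝ)
    (hg1 : ∀ t ∈ Ico (0 : ℝ) T, 0 < g t ∧ g t ≤ c * (T - t) ^ α)
    (A b : Matrix (Fin n) (Fin n) ℝ) (hb : IsUnit b.det)
    (G : ℝ → Matrix (Fin n) (Fin n) ℝ)
    (hG : ∀ t ∈ Icc (0 : ℝ) T, (G t).PosDef)
    (hGb : ∀ t ∈ Icc (0 : ℝ) T, ∀ v : Fin n → ℝ,
      (G t).mulVec v ⬝ᵥ (G t).mulVec v ≤ C ^ 2 * (v ⬝ᵥ v))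
    (Γ Q : ℝ → Matrix (Fin n) (Fin n) ℝ)
    (hΓ : ∀ t, Γ t = g t • G t)
    (hQ : ∀ t, Q t = mexp ((T - t) • A) * b * (Γ t)⁻¹ * bᵀ * mexp ((T - t) • Aᵀ)) :
    ∃ lam > (0 : ℝ), ∀ t ∈ Ico (0 : ℝ) T, ∀ v : Fin n → ℝ,
      lam * (T - t) ^ (-α) * (v ⬝ᵥ v) ≤ v ⬝ᵥ (Q t).mulVec v := by
  set M : ℝ → Matrix (Fin n) (Fin n) ℝ := fun s => bᵀ * mexp (s • Aᵀ)
  obtain ⟨κ, hκ, hMκ⟩ := exists_pos_mul_dotProduct_self_le_of_continuousOn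
    (isCompact_Icc (a := 0) (b := T)) (M := M) (by fun_prop)
    fun s _ => by simpa [M, det_mul] using hb.mul (isUnit_det_mexp _)
  refine ⟨κ / (c * C), by positivity, fun t ⟨ht0, htT⟩ v => ?_⟩
  have hTt : 0 < T - t := sub_pos.mpr htT
  have htIcc : t ∈ Icc 0 T := ⟨ht0, htT.le⟩
  obtain ⟨hg0, hgle⟩ := hg1 t ⟨ht0, htT⟩
  set w := M (T - t) *ᵥ v
  have hQv : v ⬝ᵥ Q t *ᵥ v = (g t)⁻¹ * (w ⬝ᵥ (G t)⁻¹ *ᵥ w) := by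
    have hMT : (M (T - t))ᵀ = mexp ((T - t) • A) * b := by
      simp [M, mexp_smul_transpose]
    have := invertibleOfNonzero hg0.ne'
    rw [hQ, hΓ, inv_smul _ _ (isUnit_iff_ne_zero.mpr (hG t htIcc).det_pos.ne'), invOf_eq_inv, ← hMT,
      Matrix.mul_assoc _ bᵀ, dotProduct_transpose_mul_mul_mulVec, smul_mulVec, dotProduct_smul,
      smul_eq_mul]
  have hg : c⁻¹ * (T - t) ^ (-α) ≤ (g t)⁻¹ := by
    rw [Real.rpow_neg hTt.le, ← mul_inv]
    exact inv_anti₀ hg0 hgle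
  have hGw : w ⬝ᵥ w ≤ C * (w ⬝ᵥ (G t)⁻¹ *ᵥ w) :=
    (hG t htIcc).dotProduct_self_le_mul_dotProduct_inv_mulVec
      (dotProduct_mulVec_le_of_mulVec_dotProduct_self_le hC.le (hGb t htIcc)) w
  have hvw : κ * (v ⬝ᵥ v) ≤ w ⬝ᵥ w := hMκ _ ⟨hTt.le, by linarith⟩ v
  rw [hQv]
  calc κ / (c * C) * (T - t) ^ (-α) * (v ⬝ᵥ v)
      = (c⁻¹ * (T - t) ^ (-α)) * C⁻¹ * (κ * (v ⬝ᵥ v)) := by field_simp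
    _ ≤ (g t)⁻¹ * C⁻¹ * (C * (w ⬝ᵥ (G t)⁻¹ *ᵥ w)) := by
      gcongr ?_ * _ * ?_
      · exact mul_nonneg hκ.le (dotProduct_star_self_nonneg v)
      · exact hvw.trans hGw
    _ = (g t)⁻¹ * (w ⬝ᵥ (G t)⁻¹ *ᵥ w) := by field_simp

/-- Under condition (GG) on `g` (`α ∈ (1/2,1)`, `c > 0`), with `b`
invertible, `G(t)` symmetric positive definite with operator norm bounded by `C`, and
`Q(t) = e^{A(T-t)} b Γ(t)⁻¹ bᵀ e^{Aᵀ(T-t)}` where `Γ(t) = g(t) G(t)`, there exists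
`λ > 0` such that `vᵀ Q(t) v ≥ λ (T-t)^{-α} |v|²` for all `t ∈ [0,T)`, `v ∈ ℝ^n`. -/
theorem stmt4 {n : ℕ} {T α c C : ℝ} (hT : 0 < T) (hα1 : 1 / 2 < α) (hα2 : α < 1)
    (hc : 0 < c) (hC : 0 < C)
    (g : ℝ → ℝ) (hgm : Measurable g)
    (hg1 : ∀ t ∈ Ico (0 : ℝ) T, 0 < g t ∧ g t ≤ c * (T - t) ^ α)
    (hg2 : ∀ t ∈ Ico (0 : ℝ) T, (g t)⁻¹ ≤ c * (1 + (T - t) ^ (-α)))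
    (A b : Matrix (Fin n) (Fin n) ℝ) (hb : IsUnit b.det)
    (G : ℝ → Matrix (Fin n) (Fin n) ℝ)
    (hGm : ∀ i j, Measurable fun t => G t i j)
    (hG : ∀ t ∈ Icc (0 : ℝ) T, (G t).PosDef)
    (hGb : ∀ t ∈ Icc (0 : ℝ) T, ∀ v : Fin n → ℝ,
      (G t).mulVec v ⬝ᵥ (G t).mulVec v ≤ C ^ 2 * (v ⬝ᵥ v))
    (Γ Q : ℝ → Matrix (Fin n) (Fin n) ℝ)
    (hΓ : ∀ t, Γ t = g t • G t)
    (hQ : ∀ t, Q t = mexp ((T - t) • A) * b * (Γ t)⁻¹ * bᵀ * mexp ((T - t) • Aᵀ)) :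
    ∃ lam > (0 : ℝ), ∀ t ∈ Ico (0 : ℝ) T, ∀ v : Fin n → ℝ,
      lam * (T - t) ^ (-α) * (v ⬝ᵥ v) ≤ v ⬝ᵥ (Q t).mulVec v :=
  stmt4_general hc hC g hg1 A b hb G hG hGb Γ Q hΓ hQ
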